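/- arXiv:2309.10046 — 3 statements merged into one kernel-verified Lean document; each statement's English description precedes it below -/
import Mathlib

section
/- Let E be a Banach space and let Y be a closed linear subspace of the dual space E* such that the closed unit ball of Y is dense in the closed unit ball of E* with respect to the weak-* topology of E*. Let j : E → Y* be the evaluation map j(x)(y) = y(x). Then the image under j of the closed unit ball of E is dense in the closed unit ball of Y* with respect to the weak-* topology of Y* (the topology of pointwise convergence on Y): for every φ ∈ Y* with ‖φ‖ ≤ 1 there is a net (x_i) in E with ‖x_i‖ ≤ 1 such that y(x_i) → φ(y) for every y ∈ Y. -/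
/-!
Helly's lemma: fix finitely many `y₁, …, yₙ ∈ Y`. The set `{(yᵢ x)ᵢ : ‖x‖ ≤ 1}` is convex in `𝕜ⁿ`.
If `(φ yᵢ)ᵢ` were not in its closure, Hahn–Banach would give `a ∈ 𝕜ⁿ` and `u` with
`re (∑ aᵢ yᵢ x) < u` on the unit ball, so `‖∑ aᵢ yᵢ‖ ≤ u`, while
`u < re (∑ aᵢ φ yᵢ) ≤ ‖φ (∑ aᵢ yᵢ)‖ ≤ ‖∑ aᵢ yᵢ‖`.
Approximating on ever larger finite sets with ever smaller tolerance gives the net.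
-/

open RCLike Metric ComplexConjugate

section

variable {𝕜 : Type*} [RCLike 𝕜] {E : Type*} [NormedAddCommGroup E] [NormedSpace 𝕜 E]

theorem StrongDual.norm_le_of_forall_re_le {g : StrongDual 𝕜 E} {u : ℝ}
    (h : ∀ x, ‖x‖ ≤ 1 → re (g x) ≤ u) : ‖g‖ ≤ u := by
  have hu : 0 ≤ u := by simpa using h 0 (by simp)
  refine ContinuousLinearMap.opNorm_le_of_unit_norm hu fun x hx => ?_
  rcases eq_or_ne (g x) 0 with hgx | hgx
  · simpa [hgx] using hu
  -- rotating `x` by the phase of `g x` makes `g x` real and positive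
  set c : 𝕜 := conj (g x) / ‖g x‖
  have hc : ‖c‖ = 1 := by simp [c, hgx]
  have hcx : g (c • x) = ‖g x‖ := by
    rw [map_smul, smul_eq_mul, div_mul_eq_mul_div, RCLike.conj_mul, ← ofReal_pow, ← ofReal_div,
      sq, mul_self_div_self]
  simpa [hcx] using h (c • x) (by rw [norm_smul, hc, hx, one_mul])

theorem convex_image_closedBall {F : Type*} [AddCommGroup F] [Module 𝕜 F] [Module ℝ F]
    [IsScalarTower ℝ 𝕜 F] (T : E →ₗ[𝕜] F) (r : ℝ) : Convex ℝ (T '' closedBall 0 r) := by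
  let _ : NormedSpace ℝ E := NormedSpace.restrictScalars ℝ 𝕜 E
  have : IsScalarTower ℝ 𝕜 E := RestrictScalars.isScalarTower ℝ 𝕜 E
  exact (convex_closedBall 0 r).linear_image (T.restrictScalars ℝ)

theorem StrongDual.exists_norm_le_one_forall_norm_apply_sub_lt {ι : Type*} [Fintype ι]
    (f : ι → StrongDual 𝕜 E) (v : ι → 𝕜) (hv : ∀ a : ι → 𝕜, ‖∑ i, a i * v i‖ ≤ ‖∑ i, a i • f i‖)
    {δ : ℝ} (hδ : 0 < δ) : ∃ x : E, ‖x‖ ≤ 1 ∧ ∀ i, ‖f i x - v i‖ < δ := by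
  classical
  set T : E →L[𝕜] (ι → 𝕜) := ContinuousLinearMap.pi f
  suffices hvT : v ∈ closure (T '' closedBall 0 1) by
    obtain ⟨_, ⟨x, hx, rfl⟩, hxv⟩ := Metric.mem_closure_iff.1 hvT δ hδ
    refine ⟨x, mem_closedBall_zero_iff.1 hx, fun i => ?_⟩
    rw [← dist_eq_norm, dist_comm]
    exact (dist_le_pi_dist v (T x) i).trans_lt hxv
  by_contra hvT
  obtain ⟨l, u, hlT, hlv⟩ := RCLike.geometric_hahn_banach_closed_point (𝕜 := 𝕜)
    (convex_image_closedBall T.toLinearMap 1).closure isClosed_closure hvT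
  set a : ι → 𝕜 := fun i => l (Pi.single i 1)
  have hl : ∀ w, l w = ∑ i, a i * w i := fun w => by
    conv_lhs => rw [← Finset.univ_sum_single w]
    simp only [map_sum]
    refine Finset.sum_congr rfl fun i _ => ?_
    rw [mul_comm, ← smul_eq_mul, ← map_smul, ← Pi.single_smul', smul_eq_mul, mul_one]
  have hnorm : ‖∑ i, a i • f i‖ ≤ u := StrongDual.norm_le_of_forall_re_le fun x hx => by
    have hTx : (∑ i, a i • f i) x = l (T x) := by simp [hl, T]
    rw [hTx]
    exact (hlT _ (subset_closure ⟨x, mem_closedBall_zero_iff.2 hx, rfl⟩)).le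
  have := (re_le_norm (l v)).trans ((hl v ▸ hv a).trans hnorm)
  linarith

end

theorem exists_net_of_forall_finset {X Y : Type} {F : Type*} [SeminormedAddCommGroup F]
    (P : X → Prop) (g : Y → X → F) (t : Y → F)
    (h : ∀ (s : Finset Y) (δ : ℝ), 0 < δ → ∃ x, P x ∧ ∀ y ∈ s, ‖g y x - t y‖ < δ) :
    ∃ (I : Type) (_ : Preorder I), Nonempty I ∧ IsDirected I (· ≤ ·) ∧
      ∃ x : I → X, (∀ i, P (x i)) ∧
        ∀ y, ∀ δ : ℝ, 0 < δ → ∃ i₀ : I, ∀ i, i₀ ≤ i → ‖g y (x i) - t y‖ < δ := by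
  classical
  choose x hxP hx using fun i : Finset Y × ℕ => h i.1 (1 / (i.2 + 1)) Nat.one_div_pos_of_nat
  refine ⟨Finset Y × ℕ, inferInstance, inferInstance, inferInstance, x, hxP, fun y δ hδ => ?_⟩
  obtain ⟨n, hn⟩ := exists_nat_one_div_lt hδ
  refine ⟨({y}, n), fun i hi => (hx i y (hi.1 (Finset.mem_singleton_self y))).trans ?_⟩
  exact lt_of_le_of_lt (Nat.one_div_le_one_div hi.2) hn

theorem evalOn_unitBall_weakStarDense_general {𝕜 : Type} [RCLike 𝕜] {E : Type}
    [NormedAddCommGroup E] [NormedSpace 𝕜 E]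
    (Y : Submodule 𝕜 (E →L[𝕜] 𝕜))
    (φ : StrongDual 𝕜 ↥Y) (hφ : @Norm.norm _ (ContinuousLinearMap.hasOpNorm (𝕜 := 𝕜) (𝕜₂ := 𝕜) (E := ↥Y) (F := 𝕜)
      (σ₁₂ := RingHom.id 𝕜)) φ ≤ 1) :
    ∃ (I : Type) (_ : Preorder I), Nonempty I ∧ IsDirected I (· ≤ ·) ∧
      ∃ x : I → E, (∀ i, ‖x i‖ ≤ 1) ∧
        ∀ y : Y, ∀ δ : ℝ, 0 < δ → ∃ i₀ : I, ∀ i, i₀ ≤ i →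
          ‖(y : E →L[𝕜] 𝕜) (x i) - φ y‖ < δ := by
  refine exists_net_of_forall_finset (fun x : E => ‖x‖ ≤ 1) (fun (y : Y) x => (y : E →L[𝕜] 𝕜) x) φ
    fun s δ hδ => ?_
  have hφ' (y : Y) : ‖φ y‖ ≤ ‖y‖ := by
    simpa using ContinuousLinearMap.le_of_opNorm_le (𝕜 := 𝕜) (𝕜₂ := 𝕜) (E := ↥Y) (F := 𝕜)
      (σ₁₂ := RingHom.id 𝕜) φ hφ y
  have hHelly (a : s → 𝕜) : ‖∑ y, a y * φ y‖ ≤ ‖∑ y, a y • ((y : Y) : E →L[𝕜] 𝕜)‖ := by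
    calc ‖∑ y, a y * φ y‖ = ‖φ (∑ y : s, a y • (y : Y))‖ := by
          rw [map_sum]
          simp_rw [map_smul, smul_eq_mul]
      _ ≤ ‖∑ y : s, a y • (y : Y)‖ := hφ' _
      _ = ‖∑ y, a y • ((y : Y) : E →L[𝕜] 𝕜)‖ := by
        rw [Submodule.coe_norm, Submodule.coe_sum]
        rfl
  obtain ⟨x, hx, hxs⟩ := StrongDual.exists_norm_le_one_forall_norm_apply_sub_lt _ _ hHelly hδ
  exact ⟨x, hx, fun y hy => hxs ⟨y, hy⟩⟩

/-- If `Y` is a closed subspace of `E*` whose closed unit ball is weak-* dense in the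
closed unit ball of `E*`, then the image under the evaluation map `j : E → Y*` of the
closed unit ball of `E` is weak-* dense in the closed unit ball of `Y*`: for every
`φ ∈ Y*` with `‖φ‖ ≤ 1` there is a net `(x_i)` in `E` of norm at most `1` such that
`y(x_i) → φ(y)` for every `y ∈ Y`. -/
theorem evalOn_unitBall_weakStarDense {𝕜 : Type} [RCLike 𝕜] {E : Type}
    [NormedAddCommGroup E] [NormedSpace 𝕜 E] [CompleteSpace E]
    (Y : Submodule 𝕜 (E →L[𝕜] 𝕜))
    (hYclosed : IsClosed (Y : Set (E →L[𝕜] 𝕜)))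
    (hdense : ∀ φ : E →L[𝕜] 𝕜, ‖φ‖ ≤ 1 → ∀ (s : Finset E) (δ : ℝ), 0 < δ →
      ∃ y ∈ Y, ‖y‖ ≤ 1 ∧ ∀ x ∈ s, ‖y x - φ x‖ < δ)
    (φ : StrongDual 𝕜 ↥Y) (hφ : @Norm.norm _ (ContinuousLinearMap.hasOpNorm (𝕜 := 𝕜) (𝕜₂ := 𝕜) (E := ↥Y) (F := 𝕜)
      (σ₁₂ := RingHom.id 𝕜)) φ ≤ 1) :
    ∃ (I : Type) (_ : Preorder I), Nonempty I ∧ IsDirected I (· ≤ ·) ∧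
      ∃ x : I → E, (∀ i, ‖x i‖ ≤ 1) ∧
        ∀ y : Y, ∀ δ : ℝ, 0 < δ → ∃ i₀ : I, ∀ i, i₀ ≤ i →
          ‖(y : E →L[𝕜] 𝕜) (x i) - φ y‖ < δ :=
  evalOn_unitBall_weakStarDense_general Y φ hφ
end

section
/- Let Γ be a discrete group and let S be a nonempty family of unitary representations of Γ. Suppose there exist ε > 0, a directed set I, and for each i ∈ I a representation π_i ∈ S on a Hilbert space H_i and a unit vector ξ_i ∈ H_i, such that the functions f_i(g) = ⟨π_i(g)ξ_i, ξ_i⟩ satisfy: for every g ∈ Γ there is i₀ ∈ I such that for all i ≥ i₀ the number f_i(g) is real and f_i(g) ≥ ε. Then S has almost invariant vectors: for every finite subset F ⊆ Γ and every δ > 0 there exist a representation π ∈ S on a Hilbert space H_π and a unit vector ξ ∈ H_π with ‖π(g)ξ − ξ‖ < δ for all g ∈ F. -/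
open scoped ComplexOrder Pointwise

/-! A finite version of the fact that the vector of minimal norm in the closed convex hull of an
orbit is invariant. With `E = F ∪ {1}` and a single index `i` that is good for all of `E ^ L`,
let `Cₙ` be the convex hull of `π(E ^ n) ξᵢ` and `aₙ` its distance to `0`. Then `aₙ` decreases
from at most `1`, and `aₙ ≥ ε` for `n ≤ L` because `Re ⟪ξᵢ, ·⟫ ≥ ε` on `C_L`; so some step has
`a_ℓ² - a_{ℓ+1}² ≤ 1/L`. The midpoint of a near-minimiser `η ∈ C_ℓ` and `π(g)η` lies in
`C_{ℓ+1}` for `g ∈ E`, and the parallelogram law turns the small drop into a small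
`‖π(g)η - η‖`, while `‖η‖ ≥ ε`. -/

lemma norm_sub_sq_eq_of_norm_eq {𝕜 E : Type*} [RCLike 𝕜] [NormedAddCommGroup E]
    [InnerProductSpace 𝕜 E] [NormedSpace ℝ E] {x y : E} (h : ‖y‖ = ‖x‖) :
    ‖x - y‖ ^ 2 = 4 * (‖x‖ ^ 2 - ‖midpoint ℝ x y‖ ^ 2) := by
  have hmid : ‖midpoint ℝ x y‖ = ‖x + y‖ / 2 := by
    rw [midpoint_eq_smul_add, norm_smul, invOf_eq_inv, norm_inv, Real.norm_two, inv_mul_eq_div]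
  have hpar := parallelogram_law_with_norm 𝕜 x y
  rw [h] at hpar
  rw [hmid]
  linarith

lemma exists_sub_succ_le_of_sub_le_mul {b : ℕ → ℝ} {κ : ℝ} {L : ℕ} (hL : 0 < L)
    (h : b 0 - b L ≤ L * κ) : ∃ ℓ < L, b ℓ - b (ℓ + 1) ≤ κ := by
  have htel : ∑ ℓ ∈ Finset.range L, (b ℓ - b (ℓ + 1)) ≤ ∑ _ℓ ∈ Finset.range L, κ := by
    rwa [Finset.sum_range_sub', Finset.sum_const, Finset.card_range, nsmul_eq_mul]
  obtain ⟨ℓ, hℓ, hdrop⟩ := Finset.exists_le_of_sum_le (Finset.nonempty_range_iff.mpr hL.ne') htel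
  exact ⟨ℓ, Finset.mem_range.mp hℓ, hdrop⟩

section OrbitHull

variable {Γ H : Type*} [Group Γ] [DecidableEq Γ] [NormedAddCommGroup H] [InnerProductSpace ℂ H]
  [CompleteSpace H]

def orbitHull (π : Γ →* unitary (H →L[ℂ] H)) (E : Finset Γ) (ζ : H) (n : ℕ) : Set H :=
  convexHull ℝ ((fun w => (π w : H →L[ℂ] H) ζ) '' ↑(E ^ n))

variable {π : Γ →* unitary (H →L[ℂ] H)} {E : Finset Γ} {ζ : H}

lemma orbitHull_mono (hE : 1 ∈ E) : Monotone (orbitHull π E ζ) := fun _ _ hmn =>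
  convexHull_mono <| Set.image_mono <| Finset.coe_subset.mpr <| Finset.pow_subset_pow_right hE hmn

lemma mem_orbitHull_self (hE : 1 ∈ E) (n : ℕ) : ζ ∈ orbitHull π E ζ n :=
  subset_convexHull ℝ _ ⟨1, Finset.one_mem_pow hE, by simp⟩

lemma apply_mem_orbitHull_succ {g : Γ} (hg : g ∈ E) {n : ℕ} {v : H}
    (hv : v ∈ orbitHull π E ζ n) : (π g : H →L[ℂ] H) v ∈ orbitHull π E ζ (n + 1) := by
  have himage := ((π g : H →L[ℂ] H).restrictScalars ℝ).toLinearMap.image_convexHull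
    ((fun w => (π w : H →L[ℂ] H) ζ) '' ↑(E ^ n))
  refine convexHull_mono ?_ (himage ▸ Set.mem_image_of_mem _ hv)
  rintro _ ⟨_, ⟨w, hw, rfl⟩, rfl⟩
  refine ⟨g * w, ?_, by simp⟩
  rw [pow_succ']
  exact Finset.mul_mem_mul hg hw

lemma le_re_inner_of_mem_orbitHull {ε : ℝ} {n : ℕ}
    (hsep : ∀ w ∈ E ^ n, ε ≤ (inner ℂ ζ ((π w : H →L[ℂ] H) ζ)).re) {v : H}
    (hv : v ∈ orbitHull π E ζ n) : ε ≤ (inner ℂ ζ v).re := by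
  have hconv : Convex ℝ {v : H | ε ≤ (inner ℂ ζ v).re} :=
    (convex_halfSpace_re_ge ε).linear_preimage ((innerSL ℂ ζ).restrictScalars ℝ).toLinearMap
  refine hconv.convexHull_subset_iff.mpr ?_ hv
  rintro _ ⟨w, hw, rfl⟩
  exact hsep w hw

lemma norm_apply_sub_sq_le_of_mem_orbitHull (hE : 1 ∈ E) {g : Γ} (hg : g ∈ E) {n : ℕ} {η : H}
    (hη : η ∈ orbitHull π E ζ n) :
    ‖(π g : H →L[ℂ] H) η - η‖ ^ 2 ≤
      4 * (‖η‖ ^ 2 - Metric.infDist 0 (orbitHull π E ζ (n + 1)) ^ 2) := by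
  have hmid : midpoint ℝ η ((π g : H →L[ℂ] H) η) ∈ orbitHull π E ζ (n + 1) :=
    (convex_convexHull ℝ _).midpoint_mem (orbitHull_mono hE n.le_succ hη)
      (apply_mem_orbitHull_succ hg hη)
  have hinf := Metric.infDist_le_dist_of_mem (x := 0) hmid
  rw [dist_zero_left] at hinf
  rw [norm_sub_rev, norm_sub_sq_eq_of_norm_eq (𝕜 := ℂ) (Unitary.norm_map _ η)]
  gcongr
  exact Metric.infDist_nonneg

theorem exists_almost_invariant_of_le_re_inner (hE : 1 ∈ E) (hζ : ‖ζ‖ ≤ 1) {ε : ℝ} {L : ℕ}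
    (hL : 0 < L) (hsep : ∀ w ∈ E ^ L, ε ≤ (inner ℂ ζ ((π w : H →L[ℂ] H) ζ)).re) :
    ∃ η : H, ε ≤ ‖η‖ ∧ ∀ g ∈ E, ‖(π g : H →L[ℂ] H) η - η‖ ^ 2 < 8 / L := by
  set a : ℕ → ℝ := fun n => Metric.infDist 0 (orbitHull π E ζ n)
  have ha_nonneg (n : ℕ) : 0 ≤ a n := Metric.infDist_nonneg
  have ha_zero : a 0 ≤ 1 :=
    (Metric.infDist_le_dist_of_mem (mem_orbitHull_self hE 0)).trans (by rwa [dist_zero_left])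
  obtain ⟨ℓ, hℓL, hdrop⟩ := exists_sub_succ_le_of_sub_le_mul (b := fun n => a n ^ 2) (κ := 1 / L) hL
    (by field_simp; nlinarith [ha_nonneg 0, ha_nonneg L])
  obtain ⟨η, hηC, hη⟩ : ∃ η ∈ orbitHull π E ζ ℓ, ‖η‖ ^ 2 < a ℓ ^ 2 + 1 / L := by
    have : a ℓ < √(a ℓ ^ 2 + 1 / L) :=
      (Real.lt_sqrt (ha_nonneg ℓ)).mpr (lt_add_of_pos_right _ (by positivity))
    obtain ⟨η, hηC, hdist⟩ := (Metric.infDist_lt_iff ⟨ζ, mem_orbitHull_self hE ℓ⟩).mp this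
    exact ⟨η, hηC, (Real.lt_sqrt (norm_nonneg η)).mp (by simpa using hdist)⟩
  refine ⟨η, ?_, fun g hg => ?_⟩
  · calc ε ≤ (inner ℂ ζ η).re := le_re_inner_of_mem_orbitHull hsep (orbitHull_mono hE hℓL.le hηC)
      _ ≤ ‖ζ‖ * ‖η‖ := (Complex.re_le_norm _).trans (norm_inner_le_norm _ _)
      _ ≤ ‖η‖ := mul_le_of_le_one_left (norm_nonneg _) hζ
  · calc _ ≤ 4 * (‖η‖ ^ 2 - a (ℓ + 1) ^ 2) := norm_apply_sub_sq_le_of_mem_orbitHull hE hg hηC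
      _ < 8 / L := by linarith [show (8 : ℝ) / L = 8 * (1 / L) by ring]

end OrbitHull

theorem almost_invariant_vectors_of_eventually_separated_general
    {Γ : Type} [Group Γ] {ι : Type}
    (Hs : ι → Type) [∀ s, NormedAddCommGroup (Hs s)] [∀ s, InnerProductSpace ℂ (Hs s)]
    [∀ s, CompleteSpace (Hs s)]
    (π : ∀ s, Γ →* unitary (Hs s →L[ℂ] Hs s))
    (ε : ℝ) (hε : 0 < ε)
    (I : Type) (pI : Preorder I) (hne : Nonempty I) (hdir : IsDirected I (· ≤ ·))
    (s : I → ι) (ξ : ∀ i, Hs (s i)) (hξ : ∀ i, ‖ξ i‖ = 1)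
    (hsep : ∀ g : Γ, ∃ i₀ : I, ∀ i, i₀ ≤ i →
      (ε : ℂ) ≤ (inner ℂ (ξ i) (((π (s i) g : unitary (Hs (s i) →L[ℂ] Hs (s i))) :
        Hs (s i) →L[ℂ] Hs (s i)) (ξ i)) : ℂ)) :
    ∀ (F : Finset Γ) (δ : ℝ), 0 < δ → ∃ (t : ι) (η : Hs t), ‖η‖ = 1 ∧
      ∀ g ∈ F, ‖((π t g : unitary (Hs t →L[ℂ] Hs t)) : Hs t →L[ℂ] Hs t) η - η‖ < δ := by
  classical
  intro F δ hδ
  obtain ⟨L, hL⟩ := exists_nat_gt (8 / (ε * δ) ^ 2)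
  have hLpos : (0 : ℝ) < L := (by positivity : (0 : ℝ) < 8 / (ε * δ) ^ 2).trans hL
  choose i₀ hi₀ using hsep
  obtain ⟨j, hj⟩ := ((insert 1 F ^ L).image i₀).exists_le
  obtain ⟨η, hεη, hη⟩ := exists_almost_invariant_of_le_re_inner (π := π (s j))
    (Finset.mem_insert_self 1 F) (hξ j).le (by exact_mod_cast hLpos) fun w hw => by
      simpa using (Complex.le_def.mp (hi₀ w j (hj _ (Finset.mem_image_of_mem i₀ hw)))).1
  have hη0 : 0 < ‖η‖ := hε.trans_le hεη
  refine ⟨s j, (‖η‖⁻¹ : ℂ) • η, norm_smul_inv_norm (norm_pos_iff.mp hη0), fun g hg => ?_⟩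
  rw [map_smul, ← smul_sub, norm_smul, norm_inv, Complex.norm_real, norm_norm, inv_mul_lt_iff₀ hη0]
  refine lt_of_pow_lt_pow_left₀ 2 (by positivity) ?_
  calc _ < (8 : ℝ) / L := hη g (Finset.mem_insert_of_mem hg)
    _ < (ε * δ) ^ 2 := by rwa [div_lt_iff₀ hLpos, mul_comm, ← div_lt_iff₀ (by positivity)]
    _ ≤ (‖η‖ * δ) ^ 2 := by gcongr

/-- Let `Γ` be a discrete group and let `S = (π s)_{s : ι}` be a nonempty family of unitary
representations of `Γ`. If there are `ε > 0` and a net of normalized coefficient functions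
`f_i(g) = ⟨π_{s i}(g) ξ_i, ξ_i⟩` (with unit vectors `ξ_i`) such that for every `g ∈ Γ`
the values `f_i(g)` are eventually real and `≥ ε`, then `S` has almost invariant vectors. -/
theorem almost_invariant_vectors_of_eventually_separated
    {Γ : Type} [Group Γ] {ι : Type} [Nonempty ι]
    (Hs : ι → Type) [∀ s, NormedAddCommGroup (Hs s)] [∀ s, InnerProductSpace ℂ (Hs s)]
    [∀ s, CompleteSpace (Hs s)]
    (π : ∀ s, Γ →* unitary (Hs s →L[ℂ] Hs s))
    (ε : ℝ) (hε : 0 < ε)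
    (I : Type) (pI : Preorder I) (hne : Nonempty I) (hdir : IsDirected I (· ≤ ·))
    (s : I → ι) (ξ : ∀ i, Hs (s i)) (hξ : ∀ i, ‖ξ i‖ = 1)
    (hsep : ∀ g : Γ, ∃ i₀ : I, ∀ i, i₀ ≤ i →
      (ε : ℂ) ≤ (inner ℂ (ξ i) (((π (s i) g : unitary (Hs (s i) →L[ℂ] Hs (s i))) :
        Hs (s i) →L[ℂ] Hs (s i)) (ξ i)) : ℂ)) :
    ∀ (F : Finset Γ) (δ : ℝ), 0 < δ → ∃ (t : ι) (η : Hs t), ‖η‖ = 1 ∧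
      ∀ g ∈ F, ‖((π t g : unitary (Hs t →L[ℂ] Hs t)) : Hs t →L[ℂ] Hs t) η - η‖ < δ :=
  almost_invariant_vectors_of_eventually_separated_general Hs π ε hε I pI hne hdir s ξ hξ hsep
end

section
/- Let G be a locally compact Hausdorff topological group. Suppose there exist ε > 0 and a net (f_i)_{i∈I} of continuous positive-definite functions on G vanishing at infinity with f_i(e) = 1, such that for every compact subset K ⊆ G there is i₀ ∈ I with: for all i ≥ i₀ and all t ∈ K, the number f_i(t) is real and f_i(t) ≥ ε. Then G has the Haagerup property: there exists a net (h_j)_{j∈J} of continuous positive-definite functions on G vanishing at infinity with h_j(e) = 1 such that h_j → 1 uniformly on every compact subset of G. -/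
open scoped ComplexOrder

/-- A function `f : G → ℂ` on a group is positive-definite if all the matrices
`[f(g_k⁻¹ g_j)]` are positive semi-definite. -/
def IsPosDefFn {G : Type} [Group G] (f : G → ℂ) : Prop :=
  ∀ (n : ℕ) (g : Fin n → G) (c : Fin n → ℂ),
    0 ≤ ∑ j, ∑ k, c j * (starRingEnd ℂ) (c k) * f ((g k)⁻¹ * g j)

/-- A function vanishes at infinity if outside suitable compact sets it is uniformly small. -/
def VanishesAtInfinity {G : Type} [TopologicalSpace G] (f : G → ℂ) : Prop :=
  ∀ δ : ℝ, 0 < δ → ∃ K : Set G, IsCompact K ∧ ∀ t ∉ K, ‖f t‖ < δ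

/-! A positive-definite `φ` turns `G →₀ ℂ` into a pre-Hilbert space with
`⟪u, v⟫ = ∑ conj (u x) v y φ (x⁻¹ y)`, on which left translation `π` is isometric, so every
coefficient `t ↦ ⟪u, π t u⟫` of a unit vector is again a normalized continuous positive-definite
function, vanishing at infinity when `φ` does.

Given `K` compact, put `L = K ∪ {1}` and let `m n` be the infimum of `‖ξ‖²` over the convex hull
of the Dirac masses at points of `Lⁿ`. Since `m` decreases from `m 0 ≤ 1` and stays nonnegative,
among the first `M` steps one is at most `1 / M`. A near-minimiser `ξ` at such a level `N` has
almost the same norm as the midpoint of `ξ` and `π t ξ` (`t ∈ K`), which lies at level `N + 1`,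
so by the parallelogram law `π t ξ` is close to `ξ`. Taking `φ = f i` with `f i ≥ ε` on `L^M`
keeps `‖ξ‖ ≥ ε`, hence the coefficient of `ξ / ‖ξ‖` is uniformly close to `1` on `K`.
-/

open scoped InnerProductSpace ComplexConjugate Pointwise
open Filter Topology

namespace IsPosDefFn

variable {G : Type} [Group G] {φ : G → ℂ}

lemma sum_fintype_nonneg (hφ : IsPosDefFn φ) {ι : Type*} [Fintype ι] (g : ι → G) (c : ι → ℂ) :
    0 ≤ ∑ j, ∑ k, c j * conj (c k) * φ ((g k)⁻¹ * g j) := by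
  let e := (Fintype.equivFin ι).symm
  have := hφ _ (g ∘ e) (c ∘ e)
  simp only [Function.comp_apply] at this
  convert this using 1
  rw [← e.sum_comp]
  exact Fintype.sum_congr _ _ fun j => (e.sum_comp _).symm

lemma sum_finset_nonneg (hφ : IsPosDefFn φ) (s : Finset G) (c : G → ℂ) :
    0 ≤ ∑ x ∈ s, ∑ y ∈ s, c x * conj (c y) * φ (y⁻¹ * x) := by
  simpa only [← s.sum_coe_sort, Function.comp_apply] using
    hφ.sum_fintype_nonneg ((↑) : s → G) (c ∘ (↑))

lemma map_inv (hφ : IsPosDefFn φ) (g : G) : φ g⁻¹ = conj (φ g) := by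
  -- the forms at `c = (1, 1)` and `c = (1, i)` on the points `(1, g)` are real
  have h1 := (Complex.nonneg_iff.1 (by simpa using hφ 1 (fun _ => 1) (fun _ => 1) : 0 ≤ φ 1)).2
  have hA := (Complex.nonneg_iff.1 (hφ 2 ![1, g] ![1, 1])).2
  have hB := (Complex.nonneg_iff.1 (hφ 2 ![1, g] ![1, Complex.I])).2
  simp only [Fin.sum_univ_two, Fin.isValue, Matrix.cons_val_zero, map_one, mul_one, inv_one,
    one_mul, Matrix.cons_val_one, Matrix.cons_val_fin_one, inv_mul_cancel, Complex.add_im,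
    Complex.conj_I, mul_neg, neg_mul, Complex.I_mul_I, neg_neg, Complex.neg_im, Complex.mul_im,
    Complex.I_re, zero_mul, Complex.I_im, zero_add] at hA hB
  apply Complex.ext <;> simp only [Complex.conj_re, Complex.conj_im] <;> linarith

end IsPosDefFn

namespace PreGNS

variable {G : Type} [Group G] {φ : G → ℂ}

noncomputable def form (φ : G → ℂ) (u v : G →₀ ℂ) : ℂ :=
  u.sum fun x a => v.sum fun y b => conj a * b * φ (x⁻¹ * y)

lemma form_add_left (u v w : G →₀ ℂ) : form φ (u + v) w = form φ u w + form φ v w :=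
  Finsupp.sum_add_index' (by simp) fun _ _ _ => by
    simp only [map_add, add_mul, Finsupp.sum_add]

lemma form_smul_left (r : ℂ) (u v : G →₀ ℂ) : form φ (r • u) v = conj r * form φ u v := by
  rw [form, form, Finsupp.sum_smul_index' (by simp), Finsupp.mul_sum]
  simp only [smul_eq_mul, map_mul, Finsupp.mul_sum, mul_assoc]

lemma form_single_single (x y : G) (a b : ℂ) :
    form φ (Finsupp.single x a) (Finsupp.single y b) = conj a * b * φ (x⁻¹ * y) := by
  simp [form]

lemma form_mapDomain_right (t : G) (u v : G →₀ ℂ) :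
    form φ u (v.mapDomain (t * ·)) =
      u.sum fun x a => v.sum fun y b => conj a * b * φ (x⁻¹ * (t * y)) := by
  simp only [form, Finsupp.sum_mapDomain_index_inj (mul_right_injective t)]

lemma form_mapDomain_mapDomain (t : G) (u v : G →₀ ℂ) :
    form φ (u.mapDomain (t * ·)) (v.mapDomain (t * ·)) = form φ u v := by
  simp only [form, Finsupp.sum_mapDomain_index_inj (mul_right_injective t), mul_inv_rev,
    mul_assoc, inv_mul_cancel_left]

lemma conj_form (hφ : IsPosDefFn φ) (u v : G →₀ ℂ) : conj (form φ v u) = form φ u v := by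
  simp only [form, Finsupp.sum, map_sum, map_mul, Complex.conj_conj, ← hφ.map_inv, mul_inv_rev,
    inv_inv]
  rw [Finset.sum_comm]
  exact Finset.sum_congr rfl fun _ _ => Finset.sum_congr rfl fun _ _ => by ring

lemma form_self_nonneg (hφ : IsPosDefFn φ) (u : G →₀ ℂ) : 0 ≤ form φ u u := by
  have := hφ.sum_finset_nonneg u.support u
  rw [Finset.sum_comm] at this
  convert this using 1
  exact Finset.sum_congr rfl fun _ _ => Finset.sum_congr rfl fun _ _ => by ring

end PreGNS

/-- The pre-Hilbert space of the GNS construction for `φ`, with semi-inner product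
`PreGNS.form φ`. -/
def PreGNS {G : Type} (_ : G → ℂ) : Type := G →₀ ℂ

namespace PreGNS

variable {G : Type} [Group G] {φ : G → ℂ}

noncomputable instance : AddCommGroup (PreGNS φ) := inferInstanceAs (AddCommGroup (G →₀ ℂ))
noncomputable instance : Module ℂ (PreGNS φ) := inferInstanceAs (Module ℂ (G →₀ ℂ))

noncomputable def of (φ : G → ℂ) (g : G) : PreGNS φ := Finsupp.single g 1

noncomputable def leftRegular (φ : G → ℂ) : Representation ℂ G (PreGNS φ) where
  toFun g := Finsupp.lmapDomain ℂ ℂ (g * ·)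
  map_one' := by simp only [one_mul]; exact Finsupp.lmapDomain_id ℂ ℂ
  map_mul' g h := by simp only [mul_assoc]; exact Finsupp.lmapDomain_comp ℂ ℂ (h * ·) (g * ·)

lemma leftRegular_of (g x : G) : leftRegular φ g (of φ x) = of φ (g * x) :=
  Finsupp.mapDomain_single

variable [hφ : Fact (IsPosDefFn φ)]

noncomputable abbrev core : PreInnerProductSpace.Core ℂ (PreGNS φ) where
  inner := form φ
  conj_inner_symm u v := conj_form hφ.out u v
  re_inner_nonneg u := (Complex.nonneg_iff.1 (form_self_nonneg hφ.out u)).1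
  add_left := form_add_left
  smul_left u v r := form_smul_left r u v

noncomputable instance : SeminormedAddCommGroup (PreGNS φ) :=
  InnerProductSpace.Core.toSeminormedAddCommGroup (c := core)

noncomputable instance : InnerProductSpace ℂ (PreGNS φ) := InnerProductSpace.ofCore core

lemma inner_of_of (x y : G) : ⟪of φ x, of φ y⟫_ℂ = φ (x⁻¹ * y) :=
  (form_single_single x y 1 1).trans (by simp)

lemma inner_leftRegular_leftRegular (g : G) (u v : PreGNS φ) :
    ⟪leftRegular φ g u, leftRegular φ g v⟫_ℂ = ⟪u, v⟫_ℂ :=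
  form_mapDomain_mapDomain g u v

lemma inner_leftRegular_right (t : G) (u v : PreGNS φ) :
    ⟪u, leftRegular φ t v⟫_ℂ = Finsupp.sum (u : G →₀ ℂ) fun x a =>
      Finsupp.sum (v : G →₀ ℂ) fun y b => conj a * b * φ (x⁻¹ * (t * y)) :=
  form_mapDomain_right t u v

end PreGNS

lemma vanishesAtInfinity_iff_tendsto {G : Type} [TopologicalSpace G] {f : G → ℂ} :
    VanishesAtInfinity f ↔ Tendsto f (cocompact G) (𝓝 0) := by
  simp [hasBasis_cocompact.tendsto_iff Metric.nhds_basis_ball, VanishesAtInfinity]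

namespace PreGNS

variable {G : Type} [Group G] [TopologicalSpace G] [IsTopologicalGroup G] {φ : G → ℂ}
  [Fact (IsPosDefFn φ)]

lemma continuous_inner_leftRegular (hφ : Continuous φ) (u v : PreGNS φ) :
    Continuous fun t => ⟪u, leftRegular φ t v⟫_ℂ := by
  simp only [inner_leftRegular_right, Finsupp.sum]
  fun_prop

lemma tendsto_inner_leftRegular_cocompact (hφ : Tendsto φ (cocompact G) (𝓝 0))
    (u v : PreGNS φ) : Tendsto (fun t => ⟪u, leftRegular φ t v⟫_ℂ) (cocompact G) (𝓝 0) := by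
  have hterm (x y : G) (c : ℂ) :
      Tendsto (fun t => c * φ (x⁻¹ * (t * y))) (cocompact G) (𝓝 0) := by
    simpa using ((hφ.comp (tendsto_cocompact_mul_left (mul_inv_cancel x))).comp
      (tendsto_cocompact_mul_right (mul_inv_cancel y))).const_mul c
  simp only [inner_leftRegular_right, Finsupp.sum]
  simpa using tendsto_finsetSum _ fun x _ => tendsto_finsetSum _ fun y _ => hterm x y _

end PreGNS

lemma Representation.isPosDefFn_inner_apply {G : Type} [Group G] {E : Type*}
    [SeminormedAddCommGroup E] [InnerProductSpace ℂ E] (ρ : Representation ℂ G E)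
    (hρ : ∀ g u v, ⟪ρ g u, ρ g v⟫_ℂ = ⟪u, v⟫_ℂ) (ξ : E) :
    IsPosDefFn fun t => ⟪ξ, ρ t ξ⟫_ℂ := by
  intro n g c
  have hcoeff (j k : Fin n) : ⟪ξ, ρ ((g k)⁻¹ * g j) ξ⟫_ℂ = ⟪ρ (g k) ξ, ρ (g j) ξ⟫_ℂ := by
    rw [← hρ (g k), ← Module.End.mul_apply, ← map_mul, mul_inv_cancel_left]
  let w := ∑ k, c k • ρ (g k) ξ
  have hw : ⟪w, w⟫_ℂ = ∑ j, ∑ k, c j * conj (c k) * ⟪ξ, ρ ((g k)⁻¹ * g j) ξ⟫_ℂ := by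
    simp only [w, sum_inner, inner_sum, inner_smul_left, inner_smul_right, hcoeff, Finset.mul_sum]
    exact Finset.sum_congr rfl fun _ _ => Finset.sum_congr rfl fun _ _ => by ring
  rw [← hw, inner_self_eq_norm_sq_to_K]
  positivity

section InnerProductSpace

variable {E : Type*} [SeminormedAddCommGroup E] [InnerProductSpace ℂ E]

lemma norm_inner_sub_one_le {u : E} (hu : ‖u‖ = 1) (v : E) : ‖⟪u, v⟫_ℂ - 1‖ ≤ ‖v - u‖ := by
  have : ⟪u, v⟫_ℂ - 1 = ⟪u, v - u⟫_ℂ := by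
    rw [inner_sub_right, inner_self_eq_norm_sq_to_K, hu]; simp
  simpa [this, hu] using norm_inner_le_norm (𝕜 := ℂ) u (v - u)

lemma sq_norm_sub_eq_of_norm_eq {ξ η : E} (h : ‖η‖ = ‖ξ‖) :
    ‖η - ξ‖ ^ 2 = 4 * (‖ξ‖ ^ 2 - ‖midpoint ℝ ξ η‖ ^ 2) := by
  have hmid : ‖midpoint ℝ ξ η‖ = ‖ξ + η‖ / 2 := by
    rw [midpoint_eq_smul_add, norm_smul]; norm_num; ring
  have := parallelogram_law_with_norm ℂ ξ η
  rw [h] at this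
  rw [hmid, norm_sub_rev, div_pow]
  linarith

lemma le_norm_of_mem_convexHull {v : E} (hv : ‖v‖ ≤ 1) {s : Set E} {ε : ℝ}
    (hs : ∀ x ∈ s, ε ≤ (⟪v, x⟫_ℂ).re) {ξ : E} (hξ : ξ ∈ convexHull ℝ s) : ε ≤ ‖ξ‖ := by
  have hconvex : Convex ℝ {x : E | ε ≤ (⟪v, x⟫_ℂ).re} :=
    convex_halfSpace_ge ⟨fun x y => by simp [inner_add_right],
      fun r x => by simp [← Complex.coe_smul, inner_smul_right]⟩ ε
  calc ε ≤ (⟪v, ξ⟫_ℂ).re := convexHull_min hs hconvex hξ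
    _ ≤ ‖⟪v, ξ⟫_ℂ‖ := Complex.re_le_norm _
    _ ≤ ‖v‖ * ‖ξ‖ := norm_inner_le_norm _ _
    _ ≤ ‖ξ‖ := mul_le_of_le_one_left (norm_nonneg _) hv

end InnerProductSpace

lemma exists_sub_succ_le_of_sub_le {a : ℕ → ℝ} {M : ℕ} {γ : ℝ} (hM : 0 < M)
    (h : a 0 - a M ≤ M * γ) : ∃ n < M, a n - a (n + 1) ≤ γ := by
  by_contra! hlt
  have := Finset.sum_lt_sum_of_nonempty (Finset.nonempty_range_iff.2 hM.ne')
    fun n hn => hlt n (Finset.mem_range.1 hn)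
  rw [Finset.sum_range_sub', Finset.sum_const, Finset.card_range, nsmul_eq_mul] at this
  linarith

namespace PreGNS

variable {G : Type} [Group G] {φ : G → ℂ} [Fact (IsPosDefFn φ)]

lemma norm_leftRegular (g : G) (u : PreGNS φ) : ‖leftRegular φ g u‖ = ‖u‖ := by
  rw [norm_eq_sqrt_re_inner (𝕜 := ℂ), norm_eq_sqrt_re_inner (𝕜 := ℂ),
    inner_leftRegular_leftRegular]

lemma norm_of (hφ1 : φ 1 = 1) (g : G) : ‖of φ g‖ = 1 := by
  rw [norm_eq_sqrt_re_inner (𝕜 := ℂ), inner_of_of]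
  simp [hφ1]

lemma leftRegular_mem_convexHull {t : G} {S T : Set G} (h : ∀ g ∈ S, t * g ∈ T) {ξ : PreGNS φ}
    (hξ : ξ ∈ convexHull ℝ (of φ '' S)) : leftRegular φ t ξ ∈ convexHull ℝ (of φ '' T) := by
  have := Set.mem_image_of_mem ((leftRegular φ t).restrictScalars ℝ) hξ
  rw [LinearMap.image_convexHull] at this
  refine convexHull_mono ?_ this
  rintro _ ⟨_, ⟨g, hg, rfl⟩, rfl⟩
  exact ⟨t * g, h g hg, (leftRegular_of t g).symm⟩

lemma le_norm_of_mem_convexHull (hφ1 : φ 1 = 1) {S : Set G} {ε : ℝ}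
    (hS : ∀ g ∈ S, ε ≤ (φ g).re) {ξ : PreGNS φ} (hξ : ξ ∈ convexHull ℝ (of φ '' S)) :
    ε ≤ ‖ξ‖ :=
  _root_.le_norm_of_mem_convexHull (norm_of hφ1 1).le
    (by rintro _ ⟨g, hg, rfl⟩; simp [inner_of_of, hS g hg]) hξ

lemma exists_almost_invariant (hφ1 : φ 1 = 1) {L : Set G} (h1L : (1 : G) ∈ L) {M : ℕ}
    {γ ε : ℝ} (hγ : 0 < γ) (hM : 1 < M * γ) (hL : ∀ g ∈ L ^ M, ε ≤ (φ g).re) :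
    ∃ ξ : PreGNS φ, ε ≤ ‖ξ‖ ∧ ∀ t ∈ L, ‖leftRegular φ t ξ - ξ‖ ^ 2 < 8 * γ := by
  let C (n : ℕ) := convexHull ℝ (of φ '' (L ^ n))
  let m (n : ℕ) := sInf ((‖·‖ ^ 2) '' C n)
  have hone (n : ℕ) : of φ 1 ∈ C n :=
    subset_convexHull ℝ _ (Set.mem_image_of_mem _ (Set.one_mem_pow h1L))
  have hne (n : ℕ) : ((‖·‖ ^ 2) '' C n).Nonempty := ⟨_, Set.mem_image_of_mem _ (hone n)⟩
  have hbdd (n : ℕ) : BddBelow ((‖·‖ ^ 2) '' C n) := ⟨0, by rintro _ ⟨ξ, -, rfl⟩; positivity⟩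
  have hm0 : m 0 ≤ 1 := csInf_le (hbdd 0) ⟨_, hone 0, by simp [norm_of hφ1]⟩
  have hmM : 0 ≤ m M := le_csInf (hne M) (by rintro _ ⟨ξ, -, rfl⟩; positivity)
  obtain ⟨N, hNM, hgap⟩ : ∃ N < M, m N - m (N + 1) ≤ γ :=
    exists_sub_succ_le_of_sub_le (Nat.pos_of_ne_zero (by rintro rfl; simp at hM; linarith))
      (by linarith)
  obtain ⟨_, ⟨ξ, hξ, rfl⟩, hξm⟩ := exists_lt_of_csInf_lt (hne N) (lt_add_of_pos_right (m N) hγ)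
  refine ⟨ξ, le_norm_of_mem_convexHull hφ1
    (fun g hg => hL g (Set.pow_subset_pow_right h1L hNM.le hg)) hξ, fun t ht => ?_⟩
  have hmid : midpoint ℝ ξ (leftRegular φ t ξ) ∈ C (N + 1) :=
    (convex_convexHull ℝ _).midpoint_mem
      (convexHull_mono (Set.image_mono (Set.pow_subset_pow_right h1L N.le_succ)) hξ)
      (leftRegular_mem_convexHull
        (fun g hg => by rw [pow_succ']; exact Set.mul_mem_mul ht hg) hξ)
  have := csInf_le (hbdd (N + 1)) (Set.mem_image_of_mem _ hmid)
  rw [sq_norm_sub_eq_of_norm_eq (norm_leftRegular t ξ)]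
  linarith

end PreGNS

lemma IsCompact.pow {M : Type*} [Monoid M] [TopologicalSpace M] [ContinuousMul M] {s : Set M}
    (hs : IsCompact s) : ∀ n : ℕ, IsCompact (s ^ n)
  | 0 => by simp
  | n + 1 => by rw [pow_succ]; exact (hs.pow n).mul hs

namespace IsPosDefFn

variable {G : Type} [Group G] [TopologicalSpace G] [IsTopologicalGroup G] {φ : G → ℂ}

open PreGNS in
lemma exists_near_one_on (hφ : IsPosDefFn φ) (hcont : Continuous φ)
    (hvan : VanishesAtInfinity φ) (hφ1 : φ 1 = 1) {K : Set G} {M : ℕ} {ε δ : ℝ} (hε : 0 < ε)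
    (hδ : 0 < δ) (hM : 8 / (ε * δ) ^ 2 < M) (hK : ∀ g ∈ insert 1 K ^ M, (ε : ℂ) ≤ φ g) :
    ∃ h : G → ℂ, Continuous h ∧ VanishesAtInfinity h ∧ IsPosDefFn h ∧ h 1 = 1 ∧
      ∀ t ∈ K, ‖h t - 1‖ < δ := by
  have : Fact (IsPosDefFn φ) := ⟨hφ⟩
  obtain ⟨ξ, hεξ, hξ⟩ := exists_almost_invariant hφ1 (Set.mem_insert 1 K)
    (γ := (ε * δ) ^ 2 / 8) (ε := ε) (by positivity)
    (by rw [div_lt_iff₀ (by positivity)] at hM; linarith)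
    fun g hg => (Complex.le_def.1 (hK g hg)).1
  have hξ0 : 0 < ‖ξ‖ := hε.trans_le hεξ
  set u := ((‖ξ‖⁻¹ : ℝ) : ℂ) • ξ
  have hu : ‖u‖ = 1 := by
    rw [norm_smul, Complex.norm_real, Real.norm_of_nonneg (by positivity),
      inv_mul_cancel₀ hξ0.ne']
  refine ⟨fun t => ⟪u, leftRegular φ t u⟫_ℂ, continuous_inner_leftRegular hcont u u,
    vanishesAtInfinity_iff_tendsto.2
      (tendsto_inner_leftRegular_cocompact (vanishesAtInfinity_iff_tendsto.1 hvan) u u),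
    (leftRegular φ).isPosDefFn_inner_apply inner_leftRegular_leftRegular u,
    by simp [inner_self_eq_norm_sq_to_K, hu], fun t ht => ?_⟩
  have hlt : ‖leftRegular φ t ξ - ξ‖ < ‖ξ‖ * δ := by
    refine lt_of_pow_lt_pow_left₀ 2 (by positivity)
      ((hξ t (Set.mem_insert_of_mem 1 ht)).trans_le ?_)
    rw [mul_div_cancel₀ _ (by norm_num)]
    gcongr
  calc ‖⟪u, leftRegular φ t u⟫_ℂ - 1‖ ≤ ‖leftRegular φ t u - u‖ := norm_inner_sub_one_le hu _
    _ = ‖ξ‖⁻¹ * ‖leftRegular φ t ξ - ξ‖ := by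
      rw [map_smul, ← smul_sub, norm_smul, Complex.norm_real, Real.norm_of_nonneg (by positivity)]
    _ < δ := by rw [inv_mul_lt_iff₀ hξ0]; exact hlt

end IsPosDefFn

theorem haagerup_of_eventually_separated_posdef_general
    {G : Type} [Group G] [TopologicalSpace G] [IsTopologicalGroup G]
    (ε : ℝ) (hε : 0 < ε)
    (I : Type) (pI : Preorder I)
    (f : I → G → ℂ)
    (hcont : ∀ i, Continuous (f i))
    (hvan : ∀ i, VanishesAtInfinity (f i))
    (hpd : ∀ i, IsPosDefFn (f i))
    (hnorm : ∀ i, f i 1 = 1)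
    (hsep : ∀ K : Set G, IsCompact K → ∃ i₀ : I, ∀ i, i₀ ≤ i → ∀ t ∈ K, (ε : ℂ) ≤ f i t) :
    ∃ (J : Type) (_ : Preorder J), Nonempty J ∧ IsDirected J (· ≤ ·) ∧
      ∃ h : J → G → ℂ,
        (∀ j, Continuous (h j) ∧ VanishesAtInfinity (h j) ∧ IsPosDefFn (h j) ∧ h j 1 = 1) ∧
        ∀ K : Set G, IsCompact K → ∀ δ : ℝ, 0 < δ → ∃ j₀ : J, ∀ j, j₀ ≤ j →
          ∀ t ∈ K, ‖h j t - 1‖ < δ := by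
  have hgood (K : TopologicalSpace.Compacts G) (n : ℕ) : ∃ h : G → ℂ, Continuous h ∧
      VanishesAtInfinity h ∧ IsPosDefFn h ∧ h 1 = 1 ∧ ∀ t ∈ K, ‖h t - 1‖ < 1 / (n + 1) := by
    obtain ⟨M, hM⟩ := exists_nat_gt (8 / (ε * (1 / (n + 1))) ^ 2)
    obtain ⟨i, hi⟩ := hsep _ ((K.isCompact.insert 1).pow M)
    exact (hpd i).exists_near_one_on (hcont i) (hvan i) (hnorm i) hε Nat.one_div_pos_of_nat hM
      (hi i le_rfl)
  choose h hcont' hvan' hpd' hone' hnear using hgood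
  refine ⟨TopologicalSpace.Compacts G × ℕ, inferInstance, inferInstance, inferInstance,
    fun j => h j.1 j.2, fun j => ⟨hcont' j.1 j.2, hvan' j.1 j.2, hpd' j.1 j.2, hone' j.1 j.2⟩,
    fun K hK δ hδ => ?_⟩
  obtain ⟨n, hn⟩ := exists_nat_one_div_lt hδ
  exact ⟨(⟨K, hK⟩, n), fun j hj t ht =>
    (hnear j.1 j.2 t (hj.1 ht)).trans_le ((Nat.one_div_le_one_div hj.2).trans hn.le)⟩

/-- If a locally compact group `G` admits `ε > 0` and a net of normalized continuous
positive-definite functions vanishing at infinity which, on every compact set, are eventually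
real-valued and `≥ ε`, then `G` has the Haagerup property. -/
theorem haagerup_of_eventually_separated_posdef
    {G : Type} [Group G] [TopologicalSpace G] [IsTopologicalGroup G]
    [LocallyCompactSpace G] [T2Space G]
    (ε : ℝ) (hε : 0 < ε)
    (I : Type) (pI : Preorder I) (hne : Nonempty I) (hdir : IsDirected I (· ≤ ·))
    (f : I → G → ℂ)
    (hcont : ∀ i, Continuous (f i))
    (hvan : ∀ i, VanishesAtInfinity (f i))
    (hpd : ∀ i, IsPosDefFn (f i))
    (hnorm : ∀ i, f i 1 = 1)
    (hsep : ∀ K : Set G, IsCompact K → ∃ i₀ : I, ∀ i, i₀ ≤ i → ∀ t ∈ K, (ε : ℂ) ≤ f i t) :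
    ∃ (J : Type) (_ : Preorder J), Nonempty J ∧ IsDirected J (· ≤ ·) ∧
      ∃ h : J → G → ℂ,
        (∀ j, Continuous (h j) ∧ VanishesAtInfinity (h j) ∧ IsPosDefFn (h j) ∧ h j 1 = 1) ∧
        ∀ K : Set G, IsCompact K → ∀ δ : ℝ, 0 < δ → ∃ j₀ : J, ∀ j, j₀ ≤ j →
          ∀ t ∈ K, ‖h j t - 1‖ < δ :=
  haagerup_of_eventually_separated_posdef_general ε hε I pI f hcont hvan hpd hnorm hsep
end
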